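/- For every z ∈ ℂ with Im z > 0, the scaled gamma function satisfies Γ*(z) · Γ*(−z) · (1 − e^{2πiz}) = 1. (This is the exponentiated form of the functional relation g(z) = −g(z e^{−πi}) − log(1 − e^{2πiz}) for the Stirling remainder g, obtained from the reflection formula for the gamma function.) -/

import Mathlib

/-!
For `Im z > 0` the principal logarithms satisfy `Log(-z) = Log z - πi`, so the exponential
factors of `Γ*(z) Γ*(-z)` collapse to `-i z e^{-πiz} / (2π)`. The reflection formula in the form
`Γ(z) Γ(-z) = -π / (z sin πz)` then leaves `i e^{-πiz} / (2 sin πz)`, which is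
`1 / (1 - e^{2πiz})` because `2 sin πz = i e^{-πiz} (1 - e^{2πiz})`.
-/

noncomputable def Gammastar (w : ℂ) : ℂ :=
  Complex.Gamma w * Complex.exp w * Complex.exp (-(w - 1 / 2) * Complex.log w) /
    (Real.sqrt (2 * Real.pi) : ℂ)

open Complex
open scoped Real

namespace Complex

lemma log_neg_of_im_pos {z : ℂ} (hz : 0 < z.im) : log (-z) = log z - π * I := by
  rw [log, log, arg_neg_eq_arg_sub_pi_of_im_pos hz, norm_neg]
  push_cast
  ring

/-- Valid for all `z`: at the poles both sides take the junk value `0`. -/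
lemma Gamma_mul_Gamma_neg (z : ℂ) : Gamma z * Gamma (-z) = -π / (z * sin (π * z)) := by
  rcases eq_or_ne z 0 with rfl | hz
  · simp [Gamma_zero]
  have h := Gamma_mul_Gamma_one_sub z
  rw [show 1 - z = -z + 1 by ring, Gamma_add_one (-z) (neg_ne_zero.2 hz)] at h
  rw [mul_comm z, ← div_div, neg_div, ← h]
  field_simp

lemma two_sin_pi_mul (z : ℂ) :
    2 * sin (π * z) = I * exp (-(π * I * z)) * (1 - exp (2 * π * I * z)) := by
  have h : exp (-(π * I * z)) * exp (2 * π * I * z) = exp (π * z * I) := by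
    rw [← exp_add]
    ring_nf
  rw [two_sin, show -(π * z) * I = -(π * I * z) by ring]
  linear_combination I * h

lemma sin_ne_zero_of_im_ne_zero {w : ℂ} (hw : w.im ≠ 0) : sin w ≠ 0 :=
  sin_ne_zero_iff.2 fun k hk => hw (by rw [hk]; simp)

end Complex

lemma Gammastar_mul_Gammastar_neg {z : ℂ} (hz : 0 < z.im) :
    Gammastar z * Gammastar (-z) =
      -I * z * exp (-(π * I * z)) * (Gamma z * Gamma (-z)) / (2 * π) := by
  have hz0 : z ≠ 0 := by rintro rfl; simp at hz
  have hexp : exp z * exp (-(z - 1 / 2) * log z) * (exp (-z) * exp (-(-z - 1 / 2) * log (-z)))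
      = -I * z * exp (-(π * I * z)) := calc
    _ = exp (log (-I) + log z + -(π * I * z)) := by
      rw [log_neg_I, log_neg_of_im_pos hz]
      simp only [← exp_add]
      ring_nf
    _ = _ := by rw [exp_add, exp_add, exp_log hz0, exp_log (neg_ne_zero.2 I_ne_zero)]
  have hsqrt : ((√(2 * π) : ℝ) : ℂ) * ((√(2 * π) : ℝ) : ℂ) = 2 * π := by
    rw [← ofReal_mul, Real.mul_self_sqrt (by positivity)]
    push_cast
    ring
  have hsqrt0 : ((√(2 * π) : ℝ) : ℂ) ≠ 0 := by
    norm_cast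
    positivity
  unfold Gammastar
  rw [← hsqrt, ← hexp]
  field_simp

/-- **Exponentiated reflection formula for the scaled gamma function:** for `Im z > 0`,
`Γ*(z)·Γ*(-z)·(1 - e^{2πiz}) = 1`. -/
theorem gammastar_reflection (z : ℂ) (hz : 0 < z.im) :
    Gammastar z * Gammastar (-z) *
      (1 - Complex.exp (2 * (Real.pi : ℂ) * Complex.I * z)) = 1 := by
  have hz0 : z ≠ 0 := by rintro rfl; simp at hz
  have hsin : 2 * sin (π * z) ≠ 0 :=
    mul_ne_zero two_ne_zero (sin_ne_zero_of_im_ne_zero (by simp [hz.ne', Real.pi_ne_zero]))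
  calc _ = I * exp (-(π * I * z)) * (1 - exp (2 * π * I * z)) / (2 * sin (π * z)) := by
        rw [Gammastar_mul_Gammastar_neg hz, Gamma_mul_Gamma_neg]
        field_simp
    _ = 1 := by rw [← two_sin_pi_mul, div_self hsin]
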